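/- arXiv:math/0306061 — 3 statements merged into one kernel-verified Lean document; each statement's English description precedes it below -/
import Mathlib

section
/- Let M be a von Neumann algebra on a complex Hilbert space H, let ρ ∈ End(M), let u ∈ M be a unitary, let σ = Ad(u)∘ρ, and for n ≥ 1 let u_n = u · ρ(u) ⋯ ρ^{n-1}(u) (with u_0 = 1). Let C_ρ denote the C*-subalgebra of M generated by ⋃_{n≥0} (ρ^n(M)' ∩ M) and C_σ the C*-subalgebra of M generated by ⋃_{n≥0} (σ^n(M)' ∩ M). Then there exists a unique *-isomorphism Θ from C_ρ onto C_σ such that Θ(x) = u_n x u_n* for every n ≥ 0 and every x ∈ ρ^n(M)' ∩ M. -/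
/-!
For `x ∈ ρ^n(M)' ∩ M` and `m ≥ n` we have `Ad(u_{m+1}) x = Ad(u_m) (Ad(ρ^m(u)) x) = Ad(u_m) x`,
because `ρ^m(u) ∈ ρ^m(M)` commutes with `ρ^m(M)' ∩ M ⊇ ρ^n(M)' ∩ M`. So the unitary conjugations
`Ad(u_m)` converge pointwise on the union of the relative commutants, which is a dense
*-subalgebra of `C_ρ`. Being isometric, they then converge on all of `C_ρ`, and the limit `Θ` is an
isometric *-homomorphism. Since `σ^n = Ad(u_n) ∘ ρ^n` on `M`, `Ad(u_n)` maps `ρ^n(M)' ∩ M` onto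
`σ^n(M)' ∩ M`; the range of `Θ` is closed, being an isometric image of a complete space, so it is
exactly `C_σ`. Uniqueness holds because *-homomorphisms between C*-algebras are continuous.
-/

noncomputable section

variable {H : Type*} [NormedAddCommGroup H] [InnerProductSpace ℂ H] [CompleteSpace H]

/-- A unital injective *-endomorphism of a (concrete) von Neumann algebra `M ⊆ B(H)`,
encoded as a map of the ambient algebra `B(H)` which is a unital injective *-homomorphism
on `M`; this is an element of `End(M)`. -/
structure VNEnd (M : VonNeumannAlgebra H) where
  toFun : (H →L[ℂ] H) → (H →L[ℂ] H)
  mem_map : ∀ x ∈ M, toFun x ∈ M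
  map_add : ∀ x ∈ M, ∀ y ∈ M, toFun (x + y) = toFun x + toFun y
  map_smul : ∀ (c : ℂ), ∀ x ∈ M, toFun (c • x) = c • toFun x
  map_mul : ∀ x ∈ M, ∀ y ∈ M, toFun (x * y) = toFun x * toFun y
  map_star : ∀ x ∈ M, toFun (star x) = star (toFun x)
  map_one : toFun 1 = 1
  inj : ∀ x ∈ M, ∀ y ∈ M, toFun x = toFun y → x = y

/-- `u` is a unitary element of `M`. -/
def IsUnitaryIn (M : VonNeumannAlgebra H) (u : H →L[ℂ] H) : Prop :=
  u ∈ M ∧ u * star u = 1 ∧ star u * u = 1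

/-- The relative commutant `f^n(M)' ∩ M` of the image of `M` under the `n`-th iterate of `f`. -/
def relComm (M : VonNeumannAlgebra H) (f : (H →L[ℂ] H) → (H →L[ℂ] H)) (n : ℕ) :
    Set (H →L[ℂ] H) :=
  Set.centralizer (f^[n] '' (M : Set (H →L[ℂ] H))) ∩ (M : Set (H →L[ℂ] H))

/-- The C*-subalgebra of `B(H)` generated by a set `S`: the norm closure of the
*-subalgebra generated by `S`. -/
def cstarGen (S : Set (H →L[ℂ] H)) : Set (H →L[ℂ] H) :=
  ((StarAlgebra.adjoin ℂ S).topologicalClosure : StarSubalgebra ℂ (H →L[ℂ] H))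

/-- `Θ` is a *-isomorphism from the subalgebra (given as a subset) `A` onto `B`,
intertwining nothing; just an algebraic *-isomorphism of the pair of subsets. -/
def IsStarIsoOn (Θ : (H →L[ℂ] H) → (H →L[ℂ] H)) (A B : Set (H →L[ℂ] H)) : Prop :=
  Set.BijOn Θ A B ∧
  (∀ x ∈ A, ∀ y ∈ A, Θ (x + y) = Θ x + Θ y) ∧
  (∀ (c : ℂ), ∀ x ∈ A, Θ (c • x) = c • Θ x) ∧
  (∀ x ∈ A, ∀ y ∈ A, Θ (x * y) = Θ x * Θ y) ∧
  (∀ x ∈ A, Θ (star x) = star (Θ x))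

open Filter Topology

theorem EquicontinuousAt.cauchySeq_of_mem_closure {ι X α : Type*} [Nonempty ι] [SemilatticeSup ι]
    [TopologicalSpace X] [PseudoMetricSpace α] {F : ι → X → α} {s : Set X} {x : X}
    (hF : EquicontinuousAt F x) (hs : ∀ y ∈ s, CauchySeq (F · y)) (hx : x ∈ closure s) :
    CauchySeq (F · x) := by
  rw [Metric.cauchySeq_iff']
  intro ε hε
  obtain ⟨y, hxy, hy⟩ : ∃ y, (∀ i, dist (F i x) (F i y) < ε / 3) ∧ y ∈ s :=
    ((Metric.equicontinuousAt_iff_right.1 hF _ (by positivity)).and_frequently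
      (mem_closure_iff_frequently.1 hx)).exists
  obtain ⟨N, hN⟩ := Metric.cauchySeq_iff'.1 (hs y hy) (ε / 3) (by positivity)
  refine ⟨N, fun n hn => ?_⟩
  calc dist (F n x) (F N x)
      ≤ dist (F n x) (F n y) + dist (F n y) (F N y) + dist (F N y) (F N x) := dist_triangle4 ..
    _ < ε / 3 + ε / 3 + ε / 3 := by
      gcongr
      exacts [hxy n, hN n hn, dist_comm (F N x) (F N y) ▸ hxy N]
    _ = ε := by ring

namespace StarAlgEquiv

variable {A B : Type*} [CStarAlgebra A] [CStarAlgebra B] (φ : ℕ → A ≃⋆ₐ[ℂ] B)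

/-- A junk value (`limUnder` of a divergent sequence) outside `pointwiseLimitDomain φ`. -/
def pointwiseLimit (x : A) : B := limUnder atTop fun n => φ n x

def pointwiseLimitDomain : StarSubalgebra ℂ A where
  carrier := {x | ∃ y, Tendsto (fun n => φ n x) atTop (𝓝 y)}
  mul_mem' := fun ⟨a, ha⟩ ⟨b, hb⟩ => ⟨a * b, by simpa only [map_mul] using ha.mul hb⟩
  add_mem' := fun ⟨a, ha⟩ ⟨b, hb⟩ => ⟨a + b, by simpa only [map_add] using ha.add hb⟩
  algebraMap_mem' c := ⟨algebraMap ℂ B c, by simp only [AlgEquivClass.commutes, tendsto_const_nhds]⟩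
  star_mem' := fun ⟨a, ha⟩ => ⟨star a, by simpa only [map_star] using ha.star⟩

variable {φ}

lemma tendsto_pointwiseLimit {x : A} (hx : x ∈ pointwiseLimitDomain φ) :
    Tendsto (fun n => φ n x) atTop (𝓝 (pointwiseLimit φ x)) :=
  tendsto_nhds_limUnder hx

lemma pointwiseLimit_eq_of_eventually_eq {x : A} {y : B} (h : ∀ᶠ n in atTop, φ n x = y) :
    pointwiseLimit φ x = y :=
  (tendsto_nhds_of_eventually_eq h).limUnder_eq

lemma mem_pointwiseLimitDomain_of_eventually_eq {x : A} {y : B} (h : ∀ᶠ n in atTop, φ n x = y) :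
    x ∈ pointwiseLimitDomain φ :=
  ⟨y, tendsto_nhds_of_eventually_eq h⟩

lemma norm_pointwiseLimit {x : A} (hx : x ∈ pointwiseLimitDomain φ) :
    ‖pointwiseLimit φ x‖ = ‖x‖ :=
  tendsto_nhds_unique (tendsto_pointwiseLimit hx).norm (by simp [StarAlgEquiv.norm_map])

variable (φ)

lemma isClosed_pointwiseLimitDomain : IsClosed (pointwiseLimitDomain φ : Set A) := by
  refine closure_subset_iff_isClosed.1 fun x hx => cauchySeq_tendsto_of_complete ?_
  have hF := LipschitzWith.uniformEquicontinuous _ 1 fun n => (isometry (φ n)).lipschitz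
  exact (hF.equicontinuous x).cauchySeq_of_mem_closure
    (fun y hy => (tendsto_pointwiseLimit hy).cauchySeq) hx

def pointwiseLimitHom : pointwiseLimitDomain φ →⋆ₐ[ℂ] B where
  toFun x := pointwiseLimit φ x
  map_one' := pointwiseLimit_eq_of_eventually_eq (by simp)
  map_mul' x y := tendsto_nhds_unique (tendsto_pointwiseLimit (x * y).2)
    (by simpa only [MulMemClass.coe_mul, map_mul] using
      (tendsto_pointwiseLimit x.2).mul (tendsto_pointwiseLimit y.2))
  map_zero' := pointwiseLimit_eq_of_eventually_eq (by simp)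
  map_add' x y := tendsto_nhds_unique (tendsto_pointwiseLimit (x + y).2)
    (by simpa only [AddMemClass.coe_add, map_add] using
      (tendsto_pointwiseLimit x.2).add (tendsto_pointwiseLimit y.2))
  commutes' c :=
    pointwiseLimit_eq_of_eventually_eq (.of_forall fun n => AlgEquivClass.commutes (φ n) c)
  map_star' x := tendsto_nhds_unique (tendsto_pointwiseLimit (star x).2)
    (by simpa only [StarMemClass.coe_star, map_star] using (tendsto_pointwiseLimit x.2).star)

lemma isometry_pointwiseLimitHom : Isometry (pointwiseLimitHom φ) :=
  AddMonoidHomClass.isometry_of_norm _ fun x => norm_pointwiseLimit x.2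

end StarAlgEquiv

lemma closure_subset_cstarGen (s : Set (H →L[ℂ] H)) : closure s ⊆ cstarGen s :=
  closure_mono (StarAlgebra.subset_adjoin ℂ s)

lemma subset_cstarGen (s : Set (H →L[ℂ] H)) : s ⊆ cstarGen s :=
  subset_closure.trans (closure_subset_cstarGen s)

lemma StarAlgHom.isStarIsoOn_image {S : StarSubalgebra ℂ (H →L[ℂ] H)}
    (ψ : S →⋆ₐ[ℂ] (H →L[ℂ] H)) (hψ : Function.Injective ψ) {Θ : (H →L[ℂ] H) → (H →L[ℂ] H)}
    (hΘ : ∀ x : S, Θ x = ψ x) : IsStarIsoOn Θ S (Θ '' S) := by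
  refine ⟨⟨Set.mapsTo_image Θ S, fun x hx y hy hxy => ?_, Set.surjOn_image Θ S⟩,
    fun x hx y hy => ?_, fun c x hx => ?_, fun x hx y hy => ?_, fun x hx => ?_⟩
  · exact congrArg Subtype.val (@hψ ⟨x, hx⟩ ⟨y, hy⟩ (by rw [← hΘ, ← hΘ]; exact hxy))
  · have h := map_add ψ ⟨x, hx⟩ ⟨y, hy⟩
    rwa [← hΘ, ← hΘ, ← hΘ] at h
  · have h := map_smul ψ c ⟨x, hx⟩
    rwa [← hΘ, ← hΘ] at h
  · have h := map_mul ψ ⟨x, hx⟩ ⟨y, hy⟩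
    rwa [← hΘ, ← hΘ, ← hΘ] at h
  · have h := map_star ψ ⟨x, hx⟩
    rwa [← hΘ, ← hΘ] at h

open scoped CStarAlgebra in
lemma IsStarIsoOn.continuousOn_cstarGen {Θ : (H →L[ℂ] H) → (H →L[ℂ] H)}
    {s T : Set (H →L[ℂ] H)} (h : IsStarIsoOn Θ (cstarGen s) T) : ContinuousOn Θ (cstarGen s) := by
  obtain ⟨-, hadd, hsmul, hmul, hstar⟩ := h
  let S := (StarAlgebra.adjoin ℂ s).topologicalClosure
  have : IsClosed (S : Set (H →L[ℂ] H)) := (StarAlgebra.adjoin ℂ s).isClosed_topologicalClosure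
  let ψ : S →⋆ₙₐ[ℂ] (H →L[ℂ] H) :=
    { toFun x := Θ x
      map_smul' c x := hsmul c x x.2
      map_zero' := by simpa using hsmul 0 0 (zero_mem S)
      map_add' x y := hadd x x.2 y y.2
      map_mul' x y := hmul x x.2 y y.2
      map_star' x := hstar x x.2 }
  exact continuousOn_iff_continuous_domRestrict.2 (map_continuous ψ)

lemma MulEquivClass.image_centralizer {F α β : Type*} [Mul α] [Mul β] [EquivLike F α β]
    [MulEquivClass F α β] (e : F) (s : Set α) : e '' s.centralizer = (e '' s).centralizer := by
  ext z
  obtain ⟨c, rfl⟩ := EquivLike.surjective e z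
  rw [(EquivLike.injective e).mem_set_image, Set.mem_centralizer_iff, Set.mem_centralizer_iff,
    Set.forall_mem_image]
  refine forall₂_congr fun m _ => ?_
  rw [← map_mul, ← map_mul, (EquivLike.injective e).eq_iff]

lemma Unitary.conjStarAlgAut_image_eq {A S : Type*} [Ring A] [StarRing A] [Algebra ℂ A]
    [StarModule ℂ A] [SetLike S A] [MulMemClass S A] [StarMemClass S A] {s : S}
    {w : unitary A} (hw : (w : A) ∈ s) : Unitary.conjStarAlgAut ℂ A w '' s = s := by
  have hmaps : ∀ v : unitary A, (v : A) ∈ s → Set.MapsTo (Unitary.conjStarAlgAut ℂ A v) s s :=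
    fun v hv x hx => by
      rw [Unitary.conjStarAlgAut_apply]; exact mul_mem (mul_mem hv hx) (StarMemClass.star_mem hv)
  refine (hmaps w hw).image_subset.antisymm fun x hx => ⟨(Unitary.conjStarAlgAut ℂ A w).symm x, ?_,
    StarAlgEquiv.apply_symm_apply _ x⟩
  rw [Unitary.conjStarAlgAut_symm]
  exact hmaps (star w) (StarMemClass.star_mem hw) hx

namespace VNEnd

variable {M : VonNeumannAlgebra H} (ρ : VNEnd M)

lemma iterate_mem (n : ℕ) {x : H →L[ℂ] H} (hx : x ∈ M) : ρ.toFun^[n] x ∈ M := by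
  induction n with
  | zero => exact hx
  | succ n ih => rw [Function.iterate_succ_apply']; exact ρ.mem_map _ ih

lemma iterate_mul (n : ℕ) {x y : H →L[ℂ] H} (hx : x ∈ M) (hy : y ∈ M) :
    ρ.toFun^[n] (x * y) = ρ.toFun^[n] x * ρ.toFun^[n] y := by
  induction n with
  | zero => rfl
  | succ n ih =>
    simp only [Function.iterate_succ_apply']
    rw [ih, ρ.map_mul _ (ρ.iterate_mem n hx) _ (ρ.iterate_mem n hy)]

lemma iterate_star (n : ℕ) {x : H →L[ℂ] H} (hx : x ∈ M) :
    ρ.toFun^[n] (star x) = star (ρ.toFun^[n] x) := by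
  induction n with
  | zero => rfl
  | succ n ih =>
    simp only [Function.iterate_succ_apply']
    rw [ih, ρ.map_star _ (ρ.iterate_mem n hx)]

lemma iterate_one (n : ℕ) : ρ.toFun^[n] 1 = 1 :=
  Function.iterate_fixed ρ.map_one n

lemma iterate_mem_unitary (n : ℕ) {u : H →L[ℂ] H} (hu : IsUnitaryIn M u) :
    ρ.toFun^[n] u ∈ unitary (H →L[ℂ] H) := by
  obtain ⟨hM, h₁, h₂⟩ := hu
  refine Unitary.mem_iff.2 ⟨?_, ?_⟩
  · rw [← ρ.iterate_star n hM, ← ρ.iterate_mul n (star_mem hM) hM, h₂, ρ.iterate_one]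
  · rw [← ρ.iterate_star n hM, ← ρ.iterate_mul n hM (star_mem hM), h₁, ρ.iterate_one]

lemma star_image_iterate (n : ℕ) :
    star (ρ.toFun^[n] '' M) = ρ.toFun^[n] '' M := by
  refine Set.Subset.antisymm ?_ fun y ⟨x, hx, hxy⟩ => ?_
  · rintro y ⟨x, hx, hxy⟩
    exact ⟨star x, star_mem hx, by rw [ρ.iterate_star n hx, hxy, star_star]⟩
  · exact ⟨star x, star_mem hx, by rw [ρ.iterate_star n hx, hxy]⟩

def relCommSubalgebra (n : ℕ) : StarSubalgebra ℂ (H →L[ℂ] H) :=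
  StarSubalgebra.centralizer ℂ (ρ.toFun^[n] '' M) ⊓ M.toStarSubalgebra

lemma coe_relCommSubalgebra (n : ℕ) :
    (ρ.relCommSubalgebra n : Set (H →L[ℂ] H)) = relComm M ρ.toFun n := by
  rw [relCommSubalgebra, StarSubalgebra.coe_inf, StarSubalgebra.coe_centralizer,
    ρ.star_image_iterate, Set.union_self, VonNeumannAlgebra.coe_toStarSubalgebra, relComm]

lemma monotone_relComm : Monotone (relComm M ρ.toFun) := by
  refine monotone_nat_of_le_succ fun n => Set.inter_subset_inter_left _ (Set.centralizer_subset ?_)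
  rintro _ ⟨x, hx, rfl⟩
  exact ⟨ρ.toFun x, ρ.mem_map x hx, (Function.iterate_succ_apply _ n x).symm⟩

lemma cstarGen_iUnion_relComm :
    cstarGen (⋃ n, relComm M ρ.toFun n) = closure (⋃ n, relComm M ρ.toFun n) := by
  have hdir : Directed (· ≤ ·) ρ.relCommSubalgebra := by
    refine (Monotone.directed_le fun m n hmn => ?_)
    simpa only [← SetLike.coe_subset_coe, coe_relCommSubalgebra] using ρ.monotone_relComm hmn
  have hunion : ⋃ n, relComm M ρ.toFun n = ↑(⨆ n, ρ.relCommSubalgebra n) := by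
    simp only [StarSubalgebra.coe_iSup_of_directed hdir, coe_relCommSubalgebra]
  rw [cstarGen, hunion, StarAlgebra.adjoin_eq, StarSubalgebra.topologicalClosure_coe]

variable (u : H →L[ℂ] H)

def cocycle (n : ℕ) : H →L[ℂ] H := ((List.range n).map fun i => ρ.toFun^[i] u).prod

lemma cocycle_zero : ρ.cocycle u 0 = 1 := rfl

lemma cocycle_succ (n : ℕ) : ρ.cocycle u (n + 1) = ρ.cocycle u n * ρ.toFun^[n] u := by
  simp [cocycle, List.range_succ]

variable {u}

lemma cocycle_mem (hu : u ∈ M) (n : ℕ) : ρ.cocycle u n ∈ M :=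
  list_prod_mem <| List.forall_mem_map.2 fun i _ => ρ.iterate_mem i hu

lemma cocycle_mem_unitary (hu : IsUnitaryIn M u) (n : ℕ) :
    ρ.cocycle u n ∈ unitary (H →L[ℂ] H) :=
  list_prod_mem <| List.forall_mem_map.2 fun i _ => ρ.iterate_mem_unitary i hu

lemma cocycle_succ_eq_mul_map (hu : u ∈ M) (n : ℕ) :
    ρ.cocycle u (n + 1) = u * ρ.toFun (ρ.cocycle u n) := by
  induction n with
  | zero => rw [cocycle_succ, cocycle_zero, ρ.map_one, one_mul, mul_one]; rfl
  | succ n ih =>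
    conv_lhs => rw [cocycle_succ, ih]
    rw [mul_assoc, Function.iterate_succ_apply',
      ← ρ.map_mul _ (ρ.cocycle_mem hu n) _ (ρ.iterate_mem n hu), ← cocycle_succ]

lemma iterate_conj (hu : u ∈ M) (n : ℕ) {x : H →L[ℂ] H} (hx : x ∈ M) :
    (fun y => u * ρ.toFun y * star u)^[n] x =
      ρ.cocycle u n * ρ.toFun^[n] x * star (ρ.cocycle u n) := by
  induction n with
  | zero => simp [cocycle_zero]
  | succ n ih =>
    have hc := ρ.cocycle_mem hu n
    have hx' := ρ.iterate_mem n hx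
    rw [Function.iterate_succ_apply', ih, Function.iterate_succ_apply',
      cocycle_succ_eq_mul_map ρ hu, ρ.map_mul _ (mul_mem hc hx') _ (star_mem hc),
      ρ.map_mul _ hc _ hx', ρ.map_star _ hc, star_mul]
    simp only [mul_assoc]

def cocycleUnitary (hu : IsUnitaryIn M u) (n : ℕ) : unitary (H →L[ℂ] H) :=
  ⟨ρ.cocycle u n, ρ.cocycle_mem_unitary hu n⟩

local notation "Ad" => Unitary.conjStarAlgAut ℂ (H →L[ℂ] H)

lemma conj_cocycle_eq_of_le (hu : IsUnitaryIn M u) {n m : ℕ} (hnm : n ≤ m) {x : H →L[ℂ] H}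
    (hx : x ∈ relComm M ρ.toFun n) :
    Ad (ρ.cocycleUnitary hu m) x = Ad (ρ.cocycleUnitary hu n) x := by
  induction m, hnm using Nat.le_induction with
  | base => rfl
  | succ m hnm ih =>
    have hcomm : ρ.toFun^[m] u * x = x * ρ.toFun^[m] u :=
      (ρ.monotone_relComm hnm hx).1 _ ⟨u, hu.1, rfl⟩
    rw [← ih]
    simp only [Unitary.conjStarAlgAut_apply, cocycleUnitary, cocycle_succ, star_mul, mul_assoc]
    rw [← mul_assoc _ x, hcomm, mul_assoc x, ← mul_assoc (ρ.toFun^[m] u),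
      Unitary.mul_star_self_of_mem (ρ.iterate_mem_unitary m hu), one_mul]

lemma relComm_conj_eq_image (hu : IsUnitaryIn M u) (n : ℕ) :
    relComm M (fun y => u * ρ.toFun y * star u) n =
      Ad (ρ.cocycleUnitary hu n) '' relComm M ρ.toFun n := by
  have himg : (fun y => u * ρ.toFun y * star u)^[n] '' M =
      Ad (ρ.cocycleUnitary hu n) '' (ρ.toFun^[n] '' M) := by
    rw [Set.image_image]
    exact Set.image_congr fun x hx => ρ.iterate_conj hu.1 n hx
  rw [relComm, relComm, himg, Set.image_inter (EquivLike.injective _),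
    Unitary.conjStarAlgAut_image_eq (ρ.cocycle_mem hu.1 n), MulEquivClass.image_centralizer]

def conjLimit (hu : IsUnitaryIn M u) : (H →L[ℂ] H) → (H →L[ℂ] H) :=
  StarAlgEquiv.pointwiseLimit fun n => Ad (ρ.cocycleUnitary hu n)

lemma eventually_conj_cocycle_eq (hu : IsUnitaryIn M u) {n : ℕ} {x : H →L[ℂ] H}
    (hx : x ∈ relComm M ρ.toFun n) :
    ∀ᶠ m in atTop, Ad (ρ.cocycleUnitary hu m) x = ρ.cocycle u n * x * star (ρ.cocycle u n) :=
  eventually_atTop.2 ⟨n, fun _ hm => ρ.conj_cocycle_eq_of_le hu hm hx⟩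

lemma conjLimit_eq (hu : IsUnitaryIn M u) {n : ℕ} {x : H →L[ℂ] H}
    (hx : x ∈ relComm M ρ.toFun n) :
    ρ.conjLimit hu x = ρ.cocycle u n * x * star (ρ.cocycle u n) :=
  StarAlgEquiv.pointwiseLimit_eq_of_eventually_eq (ρ.eventually_conj_cocycle_eq hu hx)

lemma topologicalClosure_adjoin_le_pointwiseLimitDomain (hu : IsUnitaryIn M u) :
    (StarAlgebra.adjoin ℂ (⋃ n, relComm M ρ.toFun n)).topologicalClosure ≤
      StarAlgEquiv.pointwiseLimitDomain fun n => Ad (ρ.cocycleUnitary hu n) :=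
  StarSubalgebra.topologicalClosure_minimal
    (StarAlgebra.adjoin_le <| Set.iUnion_subset fun _ _ hx =>
      StarAlgEquiv.mem_pointwiseLimitDomain_of_eventually_eq (ρ.eventually_conj_cocycle_eq hu hx))
    (StarAlgEquiv.isClosed_pointwiseLimitDomain _)

def conjLimitHom (hu : IsUnitaryIn M u) :
    (StarAlgebra.adjoin ℂ (⋃ n, relComm M ρ.toFun n)).topologicalClosure →⋆ₐ[ℂ] (H →L[ℂ] H) :=
  (StarAlgEquiv.pointwiseLimitHom _).comp
    (StarSubalgebra.inclusion (ρ.topologicalClosure_adjoin_le_pointwiseLimitDomain hu))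

lemma isometry_conjLimitHom (hu : IsUnitaryIn M u) : Isometry (ρ.conjLimitHom hu) :=
  (StarAlgEquiv.isometry_pointwiseLimitHom _).comp (Isometry.of_dist_eq fun _ _ => rfl)

lemma image_conjLimit (hu : IsUnitaryIn M u) :
    ρ.conjLimit hu '' cstarGen (⋃ n, relComm M ρ.toFun n) =
      cstarGen (⋃ n, relComm M (fun y => u * ρ.toFun y * star u) n) := by
  have hrange : ρ.conjLimit hu '' cstarGen (⋃ n, relComm M ρ.toFun n) =
      Set.range (ρ.conjLimitHom hu) := Set.image_eq_range _ _
  have hunion : ρ.conjLimit hu '' ⋃ n, relComm M ρ.toFun n =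
      ⋃ n, relComm M (fun y => u * ρ.toFun y * star u) n := by
    simp only [Set.image_iUnion, ρ.relComm_conj_eq_image hu]
    exact Set.iUnion_congr fun n => Set.image_congr fun x hx => ρ.conjLimit_eq hu hx
  refine subset_antisymm ?_ ?_
  · have hcont : ContinuousOn (ρ.conjLimit hu) (cstarGen (⋃ n, relComm M ρ.toFun n)) :=
      continuousOn_iff_continuous_domRestrict.2 (ρ.isometry_conjLimitHom hu).continuous
    rw [ρ.cstarGen_iUnion_relComm] at hcont ⊢
    exact (hcont.image_closure.trans (closure_mono hunion.subset)).trans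
      (closure_subset_cstarGen _)
  · rw [hrange]
    refine StarSubalgebra.topologicalClosure_minimal (t := (ρ.conjLimitHom hu).range)
      (StarAlgebra.adjoin_le ?_) (ρ.isometry_conjLimitHom hu).isClosedEmbedding.isClosed_range
    exact hunion ▸ (Set.image_mono (subset_cstarGen _)).trans hrange.subset

lemma isStarIsoOn_conjLimit (hu : IsUnitaryIn M u) :
    IsStarIsoOn (ρ.conjLimit hu) (cstarGen (⋃ n, relComm M ρ.toFun n))
      (cstarGen (⋃ n, relComm M (fun y => u * ρ.toFun y * star u) n)) :=
  ρ.image_conjLimit hu ▸ StarAlgHom.isStarIsoOn_image (ρ.conjLimitHom hu)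
    (ρ.isometry_conjLimitHom hu).injective fun _ => rfl

end VNEnd

/-- Let `ρ ∈ End(M)`, `u ∈ M` unitary, `σ = Ad(u)∘ρ`, and
`u_n = u · ρ(u) ⋯ ρ^{n-1}(u)` (`u_0 = 1`). There is a unique *-isomorphism `Θ` from the
C*-algebra `C_ρ` generated by `⋃ n, ρ^n(M)' ∩ M` onto the C*-algebra `C_σ` generated by
`⋃ n, σ^n(M)' ∩ M` such that `Θ = Ad(u_n)` on `ρ^n(M)' ∩ M` for every `n`. -/
theorem exists_unique_starIso_cstarGen (M : VonNeumannAlgebra H) (ρ : VNEnd M)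
    (u : H →L[ℂ] H) (hu : IsUnitaryIn M u)
    (σ : (H →L[ℂ] H) → (H →L[ℂ] H)) (hσ : σ = fun x => u * ρ.toFun x * star u)
    (U : ℕ → (H →L[ℂ] H)) (hU : ∀ n, U n = (((List.range n).map fun i => ρ.toFun^[i] u).prod)) :
    (∃ Θ : (H →L[ℂ] H) → (H →L[ℂ] H),
      IsStarIsoOn Θ (cstarGen (⋃ n, relComm M ρ.toFun n)) (cstarGen (⋃ n, relComm M σ n)) ∧
      ∀ n : ℕ, ∀ x ∈ relComm M ρ.toFun n, Θ x = U n * x * star (U n)) ∧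
    (∀ Θ₁ Θ₂ : (H →L[ℂ] H) → (H →L[ℂ] H),
      (IsStarIsoOn Θ₁ (cstarGen (⋃ n, relComm M ρ.toFun n)) (cstarGen (⋃ n, relComm M σ n)) ∧
        ∀ n : ℕ, ∀ x ∈ relComm M ρ.toFun n, Θ₁ x = U n * x * star (U n)) →
      (IsStarIsoOn Θ₂ (cstarGen (⋃ n, relComm M ρ.toFun n)) (cstarGen (⋃ n, relComm M σ n)) ∧
        ∀ n : ℕ, ∀ x ∈ relComm M ρ.toFun n, Θ₂ x = U n * x * star (U n)) →
      Set.EqOn Θ₁ Θ₂ (cstarGen (⋃ n, relComm M ρ.toFun n))) := by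
  subst hσ
  obtain rfl : U = ρ.cocycle u := funext hU
  refine ⟨⟨ρ.conjLimit hu, ρ.isStarIsoOn_conjLimit hu, fun n x hx => ρ.conjLimit_eq hu hx⟩, ?_⟩
  rintro Θ₁ Θ₂ ⟨h₁, e₁⟩ ⟨h₂, e₂⟩
  refine Set.EqOn.of_subset_closure ?_ h₁.continuousOn_cstarGen h₂.continuousOn_cstarGen
    (subset_cstarGen _) ρ.cstarGen_iUnion_relComm.subset
  intro x hx
  obtain ⟨n, hxn⟩ := Set.mem_iUnion.1 hx
  rw [e₁ n x hxn, e₂ n x hxn]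
end
end

section
/- Let M be a factor on a complex Hilbert space H (a von Neumann algebra with center ℂ·1), and let ρ ∈ End(M) have the generating property, i.e. M_ρ = M. Then ρ is a Powers shift: ⋂_{n≥0} ρ^n(M) = ℂ·1. -/
noncomputable section

variable {H : Type*} [NormedAddCommGroup H] [InnerProductSpace ℂ H] [CompleteSpace H]

/-- `M_f`: the von Neumann subalgebra of `M` generated by `⋃ n, f^n(M)' ∩ M`, realized as the
double commutant (which, by the von Neumann density theorem, is the generated von Neumann
algebra, since the union is a unital self-adjoint subset of `M`). -/
def genVN (M : VonNeumannAlgebra H) (f : (H →L[ℂ] H) → (H →L[ℂ] H)) :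
    Set (H →L[ℂ] H) :=
  Set.centralizer (Set.centralizer (⋃ n, relComm M f n))

/-- If `M` is a factor (its center is `ℂ·1`) and `ρ ∈ End(M)` has the
generating property `M_ρ = M`, then `ρ` is a Powers shift: `⋂ n, ρ^n(M) = ℂ·1`. -/
theorem powers_shift_of_generating (M : VonNeumannAlgebra H) (ρ : VNEnd M)
    (hfactor : (M : Set (H →L[ℂ] H)) ∩ Set.centralizer (M : Set (H →L[ℂ] H)) =
      Set.range fun c : ℂ => c • (1 : H →L[ℂ] H))
    (hgen : genVN M ρ.toFun = (M : Set (H →L[ℂ] H))) :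
    (⋂ n, ρ.toFun^[n] '' (M : Set (H →L[ℂ] H))) =
      Set.range fun c : ℂ => c • (1 : H →L[ℂ] H) := by

  apply Set.Subset.antisymm
  · intro x hx
    simp only [Set.mem_iInter] at hx
    have hxM : x ∈ (M : Set (H →L[ℂ] H)) := by
      have := hx 0
      simpa using this
    have hxC : x ∈ Set.centralizer (⋃ n, relComm M ρ.toFun n) := by
      intro y hy
      simp only [Set.mem_iUnion] at hy
      obtain ⟨n, hy1, _⟩ := hy
      exact (hy1 x (hx n)).symm
    have hMc : Set.centralizer (M : Set (H →L[ℂ] H)) =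
        Set.centralizer (⋃ n, relComm M ρ.toFun n) := by
      rw [← hgen, genVN, Set.centralizer_centralizer_centralizer]
    rw [← hfactor]
    exact ⟨hxM, hMc ▸ hxC⟩
  · rintro _ ⟨c, rfl⟩
    have h1M : (1 : H →L[ℂ] H) ∈ M := M.one_mem
    have hcM : c • (1 : H →L[ℂ] H) ∈ M := M.smul_mem h1M c
    have hfix : ∀ n, ρ.toFun^[n] (c • (1 : H →L[ℂ] H)) = c • 1 := by
      intro n
      induction n with
      | zero => simp
      | succ n ih =>
        rw [Function.iterate_succ_apply', ih, ρ.map_smul c 1 h1M, ρ.map_one]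
    simp only [Set.mem_iInter]
    intro n
    exact ⟨c • 1, hcM, hfix n⟩
end
end

section
/- Let H be an infinite-dimensional separable complex Hilbert space and let M = B(H) be the von Neumann algebra of all bounded operators on H (a type I_∞ factor). Then every Powers shift ρ ∈ End(M), i.e. every unital injective *-endomorphism ρ of B(H) with ⋂_{n≥0} ρ^n(B(H)) = ℂ·1, has the generating property M_ρ = M. -/
/-!
An element of `(⋃ₙ ρⁿ(B(H))')'` lies in every `ρⁿ(B(H))''`. Once each `ρⁿ(B(H))''` is known to be
`ρⁿ(B(H))`, the element lies in `⋂ₙ ρⁿ(B(H)) = ℂ·1` and so commutes with everything. The point is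
therefore that the image of a unital *-homomorphism `σ : B(H) → B(K)`, with `H`, `K` separable and
`H` infinite-dimensional, is its own double commutant.

Fix a Hilbert basis `(bᵢ)` of `H` and an orthonormal basis `(ηⱼ)` of the range of `σ(|b₀⟩⟨b₀|)`.
The maps `Vⱼ v = σ(|v⟩⟨b₀|) ηⱼ` are isometries with `σ(x) Vⱼ = Vⱼ x`, so any `z ∈ σ(B(H))''`
commutes with `Vⱼ Vⱼ₀*` and equals `σ(Vⱼ₀* z Vⱼ₀)` on every range `Vⱼ(H)`. These ranges span a dense
subspace: the projection `c` onto their orthogonal complement commutes with `σ(B(H))` and is killed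
by every `σ(|bᵢ⟩⟨bᵢ|)`. Such a `c` must vanish. Indeed, for an infinite set `S` of indices the
coordinate projection `P_S` is Murray–von Neumann equivalent to `1`, so `σ(P_S) c ≠ 0` if `c ≠ 0`,
while `σ(P_S) c = 0` for finite `S`. An uncountable almost disjoint family of infinite index sets
would then produce uncountably many pairwise orthogonal nonzero vectors `σ(P_S) c v_S` in `K`.
-/

noncomputable section

variable {H : Type*} [NormedAddCommGroup H] [InnerProductSpace ℂ H] [CompleteSpace H]

/-- The relative commutant `f^n(B(H))' ∩ B(H)` of the range of the `n`-th iterate of `f`. -/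
def relCommUniv (f : (H →L[ℂ] H) → (H →L[ℂ] H)) (n : ℕ) : Set (H →L[ℂ] H) :=
  Set.centralizer (f^[n] '' (Set.univ : Set (H →L[ℂ] H)))

/-- `M_f` for `M = B(H)`: the von Neumann subalgebra of `B(H)` generated by
`⋃ n, f^n(B(H))' ∩ B(H)`, realized as the double commutant. -/
def genVNUniv (f : (H →L[ℂ] H) → (H →L[ℂ] H)) : Set (H →L[ℂ] H) :=
  Set.centralizer (Set.centralizer (⋃ n, relCommUniv f n))

open InnerProductSpace Set Submodule TopologicalSpace
open scoped CStarAlgebra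

instance : Uncountable (ℕ → Bool) := by
  rw [← Cardinal.aleph0_lt_mk_iff, ← Cardinal.power_def]
  simpa using Cardinal.cantor Cardinal.aleph0

theorem exists_almostDisjoint_family (ι : Type*) [Countable ι] [Infinite ι] :
    ∃ S : (ℕ → Bool) → Set ι,
      (∀ f, (S f).Infinite) ∧ Pairwise fun f g => (S f ∩ S g).Finite := by
  obtain ⟨e⟩ := nonempty_equiv_of_countable (α := List Bool) (β := ι)
  -- `node f n` is the vertex at depth `n` on the branch `f` of the binary tree `List Bool`
  let node (f : ℕ → Bool) (n : ℕ) : ι := e ((List.range n).map f)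
  have node_inj : ∀ {f g m n}, node f m = node g n → m = n ∧ ∀ i < m, f i = g i := by
    intro f g m n h
    have h' := e.injective h
    have hmn : m = n := by simpa using congrArg List.length h'
    subst hmn
    refine ⟨rfl, fun i hi => ?_⟩
    simpa [hi] using congrArg (·[i]?) h'
  refine ⟨fun f => range (node f), fun f => infinite_range_of_injective
    fun m n h => (node_inj h).1, fun f g hfg => ?_⟩
  obtain ⟨i, hi⟩ := Function.ne_iff.1 hfg
  refine ((finite_Iic i).image (node f)).subset ?_
  rintro _ ⟨⟨m, rfl⟩, ⟨n, hn⟩⟩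
  refine ⟨m, ?_, rfl⟩
  by_contra him
  exact hi ((node_inj hn.symm).2 i (by simp at him; omega))

theorem eq_zero_of_map_mul_eq_zero {F A B : Type*} [Ring A] [Ring B] [FunLike F A B]
    [RingHomClass F A B] (σ : F) {p u v : A} (hvpu : v * p * u = 1) {c : B}
    (hc : σ u * c = c * σ u) (hp : σ p * c = 0) : c = 0 :=
  calc c = σ (v * p * u) * c := by rw [hvpu, map_one, one_mul]
    _ = σ v * (σ p * c) * σ u := by simp only [map_mul, mul_assoc, hc]
    _ = 0 := by rw [hp, mul_zero, zero_mul]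

section InnerProductSpace

variable {𝕜 E F : Type*} [RCLike 𝕜] [NormedAddCommGroup E] [InnerProductSpace 𝕜 E]
  [NormedAddCommGroup F] [InnerProductSpace 𝕜 F]

theorem countable_of_pairwise_inner_eq_zero [SeparableSpace E] {ι : Type*} {v : ι → E}
    (hv : ∀ i, v i ≠ 0) (horth : Pairwise fun i j => inner 𝕜 (v i) (v j) = 0) :
    Countable ι := by
  refine Pairwise.countable_of_isOpen_disjoint (s := fun i => Metric.ball (v i) (‖v i‖ / 2))
    (fun i j hij => Set.disjoint_left.2 fun w hi hj => ?_) (fun _ => Metric.isOpen_ball)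
    (fun i => Metric.nonempty_ball.2 (by simpa using hv i))
  rw [Metric.mem_ball, dist_eq_norm] at hi hj
  have hpyth : ‖v i - v j‖ ^ 2 = ‖v i‖ ^ 2 + ‖v j‖ ^ 2 := by
    simp [norm_sub_sq (𝕜 := 𝕜), horth hij]
  have htri : ‖v i - v j‖ < (‖v i‖ + ‖v j‖) / 2 :=
    calc ‖v i - v j‖ ≤ ‖v i - w‖ + ‖w - v j‖ := norm_sub_le_norm_sub_add_norm_sub ..
      _ < _ := by rw [norm_sub_rev]; linarith
  have hd := norm_nonneg (v i - v j)
  nlinarith [sq_nonneg (‖v i‖ - ‖v j‖), norm_pos_iff.2 (hv i), norm_pos_iff.2 (hv j)]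

theorem Orthonormal.countable [SeparableSpace E] {ι : Type*} {v : ι → E}
    (hv : Orthonormal 𝕜 v) : Countable ι :=
  countable_of_pairwise_inner_eq_zero hv.ne_zero hv.2

theorem Submodule.starProjection_mem_centralizer [CompleteSpace E] (U : Submodule 𝕜 E)
    [U.HasOrthogonalProjection] {S : Set (E →L[𝕜] E)} (hS : ∀ T ∈ S, star T ∈ S)
    (hU : ∀ T ∈ S, ∀ v ∈ U, T v ∈ U) :
    U.starProjection ∈ centralizer S := by
  have hPTP : ∀ T ∈ S, U.starProjection * T * U.starProjection = T * U.starProjection :=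
    fun T hT => ContinuousLinearMap.ext fun v =>
      starProjection_eq_self_iff.2 (hU T hT _ (U.starProjection_apply_mem v))
  intro T hT
  have h := congrArg star (hPTP (star T) (hS T hT))
  simp only [star_mul, star_star, (isSelfAdjoint_starProjection U).star_eq] at h
  rw [← h, ← mul_assoc, hPTP T hT]

namespace HilbertBasis

theorem infinite_of_not_finiteDimensional {ι : Type*} (b : HilbertBasis ι 𝕜 E)
    (hE : ¬FiniteDimensional 𝕜 E) : Infinite ι := by
  by_contra hι
  have : Fintype ι := @Fintype.ofFinite ι (not_infinite_iff_finite.1 hι)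
  exact hE (Module.Finite.of_basis b.toOrthonormalBasis.toBasis)

variable {ι : Type*} (b : HilbertBasis ι 𝕜 E)

theorem eq_zero_of_forall_inner_eq_zero {v : E} (hv : ∀ i, inner 𝕜 (b i) v = 0) : v = 0 :=
  b.repr.injective (by ext i; simp [HilbertBasis.repr_apply_apply, hv])

theorem ext_continuousLinearMap {f g : E →L[𝕜] F} (h : ∀ i, f (b i) = g (b i)) : f = g :=
  ContinuousLinearMap.ext_on (dense_iff_topologicalClosure_eq_top.2 b.dense_span)
    (by rintro _ ⟨i, rfl⟩; exact h i)

def closedSpan (S : Set ι) : Submodule 𝕜 E := (span 𝕜 (b '' S)).topologicalClosure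

theorem not_finiteDimensional_closedSpan {S : Set ι} (hS : S.Infinite) :
    ¬FiniteDimensional 𝕜 (b.closedSpan S) := by
  intro hfin
  have hmem (i : S) : b i ∈ b.closedSpan S := le_topologicalClosure _ (subset_span ⟨i, i.2, rfl⟩)
  have hli : LinearIndependent 𝕜 fun i : S => (⟨b i, hmem i⟩ : b.closedSpan S) :=
    LinearIndependent.of_comp (b.closedSpan S).subtype
      (b.orthonormal.linearIndependent.comp _ Subtype.val_injective)
  exact hS (finite_coe_iff.1 hli.finite)

variable [CompleteSpace E]

instance (S : Set ι) : CompleteSpace (b.closedSpan S) :=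
  inferInstanceAs (CompleteSpace (span 𝕜 (b '' S)).topologicalClosure)

def proj (S : Set ι) : E →L[𝕜] E := (b.closedSpan S).starProjection

theorem isSelfAdjoint_proj (S : Set ι) : IsSelfAdjoint (b.proj S) :=
  isSelfAdjoint_starProjection _

theorem proj_apply_of_mem {S : Set ι} {i : ι} (hi : i ∈ S) : b.proj S (b i) = b i :=
  starProjection_eq_self_iff.2 (le_topologicalClosure _ (subset_span ⟨i, hi, rfl⟩))

theorem proj_apply_of_notMem {S : Set ι} {i : ι} (hi : i ∉ S) : b.proj S (b i) = 0 := by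
  rw [proj, starProjection_apply_eq_zero_iff, closedSpan, orthogonal_closure]
  have : span 𝕜 {b i} ⟂ span 𝕜 (b '' S) := isOrtho_span.2 <| by
    rintro _ rfl _ ⟨j, hj, rfl⟩
    exact b.orthonormal.2 fun hij => hi (hij ▸ hj)
  exact this.le (mem_span_singleton_self _)

theorem proj_mul_proj (S T : Set ι) : b.proj S * b.proj T = b.proj (S ∩ T) := by
  refine b.ext_continuousLinearMap fun i => ?_
  by_cases hT : i ∈ T <;> by_cases hS : i ∈ S <;>
    simp [proj_apply_of_mem, proj_apply_of_notMem, *]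

theorem proj_finset [DecidableEq ι] (s : Finset ι) :
    b.proj s = ∑ i ∈ s, rankOne 𝕜 (b i) (b i) := by
  refine b.ext_continuousLinearMap fun j => ?_
  have hinner (i : ι) : inner 𝕜 (b i) (b j) = if i = j then 1 else 0 :=
    orthonormal_iff_ite.1 b.orthonormal i j
  simp only [FunLike.coe_sum, Finset.sum_apply, rankOne_apply, hinner, ite_smul, one_smul,
    zero_smul, Finset.sum_ite_eq']
  split_ifs with hj
  exacts [b.proj_apply_of_mem hj, b.proj_apply_of_notMem hj]

end HilbertBasis

theorem exists_hilbertBasis_of_separable [CompleteSpace E] [SeparableSpace E]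
    (hE : ¬FiniteDimensional 𝕜 E) (ι : Type*) [Countable ι] [Infinite ι] :
    Nonempty (HilbertBasis ι 𝕜 E) := by
  obtain ⟨w, b, -⟩ := exists_hilbertBasis 𝕜 E
  have := b.orthonormal.countable
  have := b.infinite_of_not_finiteDimensional hE
  obtain ⟨e⟩ := nonempty_equiv_of_countable (α := ι) (β := w)
  refine ⟨HilbertBasis.mkOfOrthogonalEqBot (b.orthonormal.comp e e.injective) ?_⟩
  rw [range_comp, e.range_eq_univ, image_univ, ← topologicalClosure_eq_top_iff]
  exact b.dense_span

theorem exists_linearIsometryEquiv_of_separable [CompleteSpace E] [CompleteSpace F]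
    [SeparableSpace E] [SeparableSpace F] (hE : ¬FiniteDimensional 𝕜 E)
    (hF : ¬FiniteDimensional 𝕜 F) : Nonempty (E ≃ₗᵢ[𝕜] F) := by
  obtain ⟨bE⟩ := exists_hilbertBasis_of_separable hE ℕ
  obtain ⟨bF⟩ := exists_hilbertBasis_of_separable hF ℕ
  exact ⟨bE.repr.trans bF.repr.symm⟩

theorem exists_star_mul_starProjection_mul_eq_one [CompleteSpace E] [SeparableSpace E]
    (hE : ¬FiniteDimensional 𝕜 E) (U : Submodule 𝕜 E) [CompleteSpace U]
    (hU : ¬FiniteDimensional 𝕜 U) : ∃ u : E →L[𝕜] E, star u * U.starProjection * u = 1 := by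
  have : SecondCountableTopology E := UniformSpace.secondCountable_of_separable E
  obtain ⟨e⟩ := exists_linearIsometryEquiv_of_separable hE hU
  let u := (U.subtypeₗᵢ.comp e.toLinearIsometry).toContinuousLinearMap
  have hPu : U.starProjection * u = u :=
    ContinuousLinearMap.ext fun v => U.starProjection_eq_self_iff.2 (e v).2
  exact ⟨u, by rw [mul_assoc, hPu, ContinuousLinearMap.star_eq_adjoint,
    ContinuousLinearMap.mul_def, LinearIsometry.adjoint_comp_self]⟩

end InnerProductSpace

section Representation

open ContinuousLinearMap

variable {K : Type*} [NormedAddCommGroup K] [InnerProductSpace ℂ K] [CompleteSpace K]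
  (σ : (H →L[ℂ] H) →⋆ₐ[ℂ] (K →L[ℂ] K))

theorem eq_zero_of_map_rankOne_mul_eq_zero [SeparableSpace H] [SeparableSpace K]
    (hinf : ¬FiniteDimensional ℂ H) {ι : Type*} (b : HilbertBasis ι ℂ H) {c : K →L[ℂ] K}
    (hc : c ∈ centralizer (range σ)) (h : ∀ i, σ (rankOne ℂ (b i) (b i)) * c = 0) :
    c = 0 := by
  classical
  by_contra hc0
  have := b.orthonormal.countable
  have := b.infinite_of_not_finiteDimensional hinf
  have hfinite (s : Finset ι) : σ (b.proj s) * c = 0 := by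
    rw [b.proj_finset, map_sum, Finset.sum_mul]
    exact Finset.sum_eq_zero fun i _ => h i
  have hinfinite {S : Set ι} (hS : S.Infinite) : σ (b.proj S) * c ≠ 0 := fun h0 => by
    obtain ⟨u, hu⟩ := exists_star_mul_starProjection_mul_eq_one hinf _
      (b.not_finiteDimensional_closedSpan hS)
    exact hc0 (eq_zero_of_map_mul_eq_zero σ hu (hc _ ⟨u, rfl⟩) h0)
  obtain ⟨S, hS, hSS⟩ := exists_almostDisjoint_family ι
  have hv (f : ℕ → Bool) : ∃ v, (σ (b.proj (S f)) * c) v ≠ 0 := by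
    by_contra! hv
    exact hinfinite (hS f) (ext hv)
  choose v hv using hv
  refine not_countable (countable_of_pairwise_inner_eq_zero (𝕜 := ℂ) hv fun f g hfg => ?_)
  have hσP (T : Set ι) : adjoint (σ (b.proj T)) = σ (b.proj T) := by
    rw [← star_eq_adjoint, ← map_star, (b.isSelfAdjoint_proj T).star_eq]
  dsimp only
  rw [mul_apply_eq_comp, ← adjoint_inner_right, hσP,
    ← mul_apply_eq_comp, ← mul_assoc, ← map_mul, b.proj_mul_proj,
    ← (hSS hfg).coe_toFinset, hfinite, zero_apply, inner_zero_right]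

def intertwiner (e : H) (ξ : K) : H →L[ℂ] K :=
  apply ℂ K ξ ∘L ⟨σ.toAlgHom.toLinearMap, map_continuous σ⟩ ∘L
    (rankOne ℂ).flip e

@[simp] theorem intertwiner_apply (e : H) (ξ : K) (v : H) :
    intertwiner σ e ξ v = σ (rankOne ℂ v e) ξ := rfl

theorem map_comp_intertwiner (e : H) (ξ : K) (x : H →L[ℂ] H) :
    σ x ∘L intertwiner σ e ξ = intertwiner σ e ξ ∘L x := by
  ext v
  simp only [comp_apply, intertwiner_apply, ← mul_apply_eq_comp,
    ← map_mul, ContinuousLinearMap.mul_def, comp_rankOne]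

theorem adjoint_intertwiner_comp_self {e : H} {ξ : K} (hξ : σ (rankOne ℂ e e) ξ = ξ)
    (hξ1 : ‖ξ‖ = 1) :
    adjoint (intertwiner σ e ξ) ∘L intertwiner σ e ξ = 1 := by
  ext v
  refine ext_inner_right ℂ fun w => ?_
  rw [comp_apply, adjoint_inner_left, intertwiner_apply,
    intertwiner_apply, ← adjoint_inner_right,
    ← star_eq_adjoint, ← map_star, star_eq_adjoint,
    adjoint_rankOne, ← mul_apply_eq_comp, ← map_mul, ContinuousLinearMap.mul_def,
    rankOne_comp_rankOne, map_smul, smul_apply, hξ, inner_smul_right, inner_self_eq_norm_sq_to_K,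
    hξ1]
  simp

theorem adjoint_comp_map_of_forall_map_comp {V : H →L[ℂ] K} (hV : ∀ x, σ x ∘L V = V ∘L x)
    (x : H →L[ℂ] H) :
    adjoint V ∘L σ x = x ∘L adjoint V := by
  have h := congrArg adjoint (hV (star x))
  rwa [adjoint_comp, adjoint_comp,
    ← star_eq_adjoint, ← star_eq_adjoint (star x),
    ← map_star, star_star] at h

theorem eq_zero_of_forall_adjoint_intertwiner_apply_eq_zero [SeparableSpace H] [SeparableSpace K]
    (hinf : ¬FiniteDimensional ℂ H) {ι : Type*} (b : HilbertBasis ι ℂ H) (i₀ : ι) {J : Type*}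
    {η : J → K}
    (hη : ∀ ξ, σ (rankOne ℂ (b i₀) (b i₀)) ξ = ξ → (∀ j, inner ℂ (η j) ξ = 0) → ξ = 0) {ζ : K}
    (hζ : ∀ j, adjoint (intertwiner σ (b i₀) (η j)) ζ = 0) : ζ = 0 := by
  set V := fun j => intertwiner σ (b i₀) (η j)
  set U : Submodule ℂ K := (⨆ j, (V j).range)ᗮ
  have hmemU (ζ : K) : ζ ∈ U ↔ ∀ j, adjoint (V j) ζ = 0 := by
    simp [U, ← iInf_orthogonal, orthogonal_range]
  have hc : U.starProjection ∈ centralizer (range σ) := by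
    refine U.starProjection_mem_centralizer (by rintro _ ⟨x, rfl⟩; exact ⟨star x, map_star σ x⟩) ?_
    rintro _ ⟨x, rfl⟩ ζ hζ
    rw [hmemU] at hζ ⊢
    intro j
    rw [← comp_apply,
      adjoint_comp_map_of_forall_map_comp σ (map_comp_intertwiner σ _ _),
      comp_apply, hζ j, map_zero]
  have hb₀ : inner ℂ (b i₀) (b i₀) = 1 := by simp [b.orthonormal.1 i₀]
  suffices U.starProjection = 0 by
    rw [← U.starProjection_eq_self_iff.2 ((hmemU ζ).2 hζ), this, zero_apply]
  refine eq_zero_of_map_rankOne_mul_eq_zero σ hinf b hc fun i => ext fun ζ' => ?_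
  have hξ : σ (rankOne ℂ (b i₀) (b i)) (U.starProjection ζ') = 0 := by
    refine hη _ ?_ fun j => ?_
    · rw [← mul_apply_eq_comp, ← map_mul, ContinuousLinearMap.mul_def, comp_rankOne,
        rankOne_apply, hb₀, one_smul]
    · rw [← adjoint_inner_left, ← star_eq_adjoint,
        ← map_star, star_eq_adjoint, adjoint_rankOne, ← intertwiner_apply,
        ← adjoint_inner_right, (hmemU _).1 (U.starProjection_apply_mem ζ') j,
        inner_zero_right]
  have hp : rankOne ℂ (b i) (b i) = rankOne ℂ (b i) (b i₀) * rankOne ℂ (b i₀) (b i) := by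
    rw [ContinuousLinearMap.mul_def, rankOne_comp_rankOne, hb₀, one_smul]
  rw [hp, map_mul, mul_apply_eq_comp, mul_apply_eq_comp, hξ, map_zero, zero_apply]

theorem centralizer_centralizer_range_subset_of_intertwiners {J : Type*} (V : J → H →L[ℂ] K)
    (hV : ∀ j, adjoint (V j) ∘L V j = 1)
    (hσV : ∀ j x, σ x ∘L V j = V j ∘L x)
    (hdense : ∀ ζ, (∀ j, adjoint (V j) ζ = 0) → ζ = 0) :
    centralizer (centralizer (range σ)) ⊆ range σ := by
  intro z hz
  rcases isEmpty_or_nonempty J with hJ | ⟨⟨j₀⟩⟩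
  · exact ⟨0, ext fun ζ => by rw [hdense ζ isEmptyElim, map_zero, map_zero]⟩
  have hcomm (j : J) : V j ∘L adjoint (V j₀) ∈ centralizer (range σ) := by
    rintro _ ⟨x, rfl⟩
    rw [ContinuousLinearMap.mul_def, ContinuousLinearMap.mul_def, ← comp_assoc,
      hσV]
    simp only [comp_assoc, adjoint_comp_map_of_forall_map_comp σ (hσV j₀)]
  set y := adjoint (V j₀) ∘L z ∘L V j₀
  have hzV (j : J) : (z - σ y) ∘L V j = 0 := by
    have h := hz _ (hcomm j)
    rw [ContinuousLinearMap.mul_def, ContinuousLinearMap.mul_def] at h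
    calc (z - σ y) ∘L V j = z ∘L V j - V j ∘L y := by rw [sub_comp, hσV]
      _ = z ∘L V j - ((V j ∘L adjoint (V j₀)) ∘L z) ∘L V j₀ := by
        simp only [y, comp_assoc]
      _ = z ∘L V j - z ∘L V j ∘L (adjoint (V j₀) ∘L V j₀) := by
        rw [h]; simp only [comp_assoc]
      _ = 0 := by rw [hV]; exact sub_self _
  refine ⟨y, (sub_eq_zero.1 ?_).symm⟩
  have hadj : adjoint (z - σ y) = 0 :=
    ext fun ζ => hdense _ fun j => by
      rw [← comp_apply, ← adjoint_comp, hzV, map_zero,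
        zero_apply]
  rw [← adjoint_adjoint (z - σ y), hadj, map_zero]

theorem centralizer_centralizer_range_subset [SeparableSpace H] [SeparableSpace K]
    (hinf : ¬FiniteDimensional ℂ H) : centralizer (centralizer (range σ)) ⊆ range σ := by
  obtain ⟨b⟩ := exists_hilbertBasis_of_separable hinf ℕ
  set F : Submodule ℂ K := (σ (rankOne ℂ (b 0) (b 0)) - 1 : K →L[ℂ] K).ker
  have hF (ξ : K) : ξ ∈ F ↔ σ (rankOne ℂ (b 0) (b 0)) ξ = ξ := by simp [F, sub_eq_zero]
  have : CompleteSpace F := (isClosed_ker _).completeSpace_coe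
  obtain ⟨J, η, -⟩ := exists_hilbertBasis ℂ F
  refine centralizer_centralizer_range_subset_of_intertwiners σ
    (fun j => intertwiner σ (b 0) (η j))
    (fun j => adjoint_intertwiner_comp_self σ ((hF _).1 (η j).2) (η.orthonormal.1 j))
    (fun j => map_comp_intertwiner σ _ _)
    fun ζ hζ => eq_zero_of_forall_adjoint_intertwiner_apply_eq_zero σ hinf b 0
      (fun ξ hξ hηξ => ?_) hζ
  simpa using congrArg Subtype.val (η.eq_zero_of_forall_inner_eq_zero (v := ⟨ξ, (hF ξ).2 hξ⟩) hηξ)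

end Representation

theorem generating_of_powers_shift_general [TopologicalSpace.SeparableSpace H]
    (hinf : ¬ FiniteDimensional ℂ H)
    (ρ : (H →L[ℂ] H) →⋆ₐ[ℂ] (H →L[ℂ] H))
    (hshift : (⋂ n, (⇑ρ)^[n] '' (Set.univ : Set (H →L[ℂ] H))) =
      Set.range fun c : ℂ => c • (1 : H →L[ℂ] H)) :
    genVNUniv ⇑ρ = (Set.univ : Set (H →L[ℂ] H)) := by
  refine eq_univ_of_forall fun x z hz => ?_
  have hpow (n : ℕ) : ⇑(ρ ^ n) = (⇑ρ)^[n] := hom_coe_pow _ rfl (fun _ _ => rfl) ρ n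
  have hz_range (n : ℕ) : z ∈ (⇑ρ)^[n] '' univ := by
    rw [image_univ, ← hpow]
    exact centralizer_centralizer_range_subset (ρ ^ n) hinf <| by
      rw [hpow, ← image_univ]
      exact centralizer_subset (subset_iUnion (relCommUniv ⇑ρ) n) hz
  obtain ⟨c, rfl⟩ : z ∈ range fun c : ℂ => c • (1 : H →L[ℂ] H) :=
    hshift ▸ mem_iInter.2 hz_range
  simp

/-- Let `H` be an infinite-dimensional separable Hilbert space and
`M = B(H)` (a type I_∞ factor). Every Powers shift `ρ ∈ End(B(H))`, i.e. every unital
injective *-endomorphism with `⋂ n, ρ^n(B(H)) = ℂ·1`, has the generating property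
`M_ρ = B(H)`. -/
theorem generating_of_powers_shift [TopologicalSpace.SeparableSpace H]
    (hinf : ¬ FiniteDimensional ℂ H)
    (ρ : (H →L[ℂ] H) →⋆ₐ[ℂ] (H →L[ℂ] H)) (hρinj : Function.Injective ρ)
    (hshift : (⋂ n, (⇑ρ)^[n] '' (Set.univ : Set (H →L[ℂ] H))) =
      Set.range fun c : ℂ => c • (1 : H →L[ℂ] H)) :
    genVNUniv ⇑ρ = (Set.univ : Set (H →L[ℂ] H)) :=
  generating_of_powers_shift_general hinf ρ hshift
end
end
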